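/- Let G be a loop-free digraph with n ≥ 1 vertices and weak separator number k ≥ 1. Then k ≤ dpw(G) ≤ crank(G) ≤ k·log₂(n/k) − 1 + k (in particular crank(G) = O(k·log(n/k))). -/

import Mathlib

open scoped Classical

variable {V : Type*}

/-- `b` is reachable from `a` by a (possibly empty) directed path staying inside `S`. -/
def ReachIn (E : V → V → Prop) (S : Finset V) (a b : V) : Prop :=
  Relation.ReflTransGen (fun x y => x ∈ S ∧ y ∈ S ∧ E x y) a b

/-- The induced subdigraph `G[S]` is strongly connected. -/
def StronglyConnIn (E : V → V → Prop) (S : Finset V) : Prop :=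
  ∀ a ∈ S, ∀ b ∈ S, ReachIn E S a b

/-- The induced subdigraph `G[S]` contains at least one edge. -/
def HasEdgeIn (E : V → V → Prop) (S : Finset V) : Prop :=
  ∃ a ∈ S, ∃ b ∈ S, E a b

/-- `G[S]` is acyclic: every strongly connected component of `G[S]` is trivial,
equivalently there is no edge lying on a closed walk inside `S`. -/
def AcyclicIn (E : V → V → Prop) (S : Finset V) : Prop :=
  ¬ ∃ a ∈ S, ∃ b ∈ S, E a b ∧ ReachIn E S b a

open Classical in
/-- The strongly connected component of `v` in the induced subdigraph `G[S]`. -/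
noncomputable def sccOf [DecidableEq V] (E : V → V → Prop) (S : Finset V) (v : V) : Finset V :=
  S.filter (fun u => ReachIn E S v u ∧ ReachIn E S u v)

open Classical in
/-- Fuel-based auxiliary function implementing the recursive definition of cycle rank. -/
noncomputable def crankAux [DecidableEq V] (E : V → V → Prop) : ℕ → Finset V → ℕ
  | 0, _ => 0
  | n + 1, S =>
    if AcyclicIn E S then 0
    else if StronglyConnIn E S then
      1 + sInf {m | ∃ v ∈ S, crankAux E n (S.erase v) = m}
    else
      S.sup (fun v => crankAux E n (sccOf E S v))

/-- The cycle rank of the digraph `(V, E)`. -/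
noncomputable def crank [DecidableEq V] [Fintype V] (E : V → V → Prop) : ℕ :=
  crankAux E (Fintype.card V) Finset.univ


/-- `S` is a weak balanced separator for `U`: every strongly connected component of
`G[U ∖ S]` contains at most `⌈|U ∖ S|/2⌉` vertices. -/
def IsWeakBalSep {V : Type*} [DecidableEq V] (E : V → V → Prop) (U S : Finset V) : Prop :=
  ∀ v ∈ U \ S, (sccOf E (U \ S) v).card ≤ ((U \ S).card + 1) / 2
/-- The minimum size of a weak balanced separator for `U`. -/
noncomputable def minWeakSep {V : Type*} [DecidableEq V] (E : V → V → Prop) (U : Finset V) : ℕ :=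
  sInf {c : ℕ | ∃ S : Finset V, S.card ≤ c ∧ IsWeakBalSep E U S}

/-- The weak separator number: the maximum over all `U ⊆ V` of the minimum size of a
weak balanced separator for `U`. -/
noncomputable def snum {V : Type*} [DecidableEq V] [Fintype V] (E : V → V → Prop) : ℕ :=
  Finset.univ.powerset.sup (minWeakSep E)
/-- `L` is a directed path decomposition of `(V, E)`: a sequence of bags covering all
vertices, such that `W_i ∩ W_k ⊆ W_j` for `i < j < k`, and each edge `(u,v)` either has
both endpoints in a common bag, or `u` occurs in a bag strictly before a bag containing `v`. -/
def IsDirPathDecomp {V : Type*} (E : V → V → Prop) (L : List (Finset V)) : Prop :=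
  (∀ v : V, ∃ W ∈ L, v ∈ W) ∧
  (∀ i j k : ℕ, i < j → j < k →
    ∀ (hi : i < L.length) (hj : j < L.length) (hk : k < L.length),
      ∀ v, v ∈ L.get ⟨i, hi⟩ → v ∈ L.get ⟨k, hk⟩ → v ∈ L.get ⟨j, hj⟩) ∧
  (∀ u v, E u v → (∃ W ∈ L, u ∈ W ∧ v ∈ W) ∨
      ∃ (i j : ℕ) (hi : i < L.length) (hj : j < L.length),
        i < j ∧ u ∈ L.get ⟨i, hi⟩ ∧ v ∈ L.get ⟨j, hj⟩)

/-- The directed pathwidth of `(V, E)`: the minimum, over all directed path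
decompositions, of (maximum bag size) − 1. -/
noncomputable def dpw {V : Type*} [Fintype V] (E : V → V → Prop) : ℕ :=
  sInf {w : ℕ | ∃ L : List (Finset V), IsDirPathDecomp E L ∧ ∀ W ∈ L, W.card ≤ w + 1}

/-!
For `snum ≤ dpw`, read a directed path decomposition of width `w` as a family of intervals of bag
indices, one per vertex, such that every edge `x → y` has `x` starting no later than `y` ends.
Sweep a point across the endpoints of the intervals of the vertices of `U` and stop at the median
endpoint: the intervals containing the point in their interior separate the intervals to its right
from those to its left, no edge goes from right to left, and there are at most `w` of them because
the bag at the point also holds the interval having the point as an endpoint.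

For `dpw ≤ crank`, follow the recursive definition of cycle rank: the vertex whose deletion realises
the cycle rank of a strongly connected digraph is put into every bag, and a digraph that is not
strongly connected splits into a set closed under reachability and the rest, whose decompositions
are concatenated; cycle rank is monotone under taking induced subgraphs.

For the upper bound, deleting a weak balanced separator of `t ≤ k` vertices lowers the cycle rank by
at most `t` and leaves strong components of at most `⌈(m - t) / 2⌉` vertices. The resulting
recursion is solved by `k log₂(m / k) + k - 1`, by concavity of the logarithm.
-/

open Finset

section Reachability

variable {E : V → V → Prop} {S T : Finset V} {u v : V}

theorem reachIn_mono (hST : S ⊆ T) (h : ReachIn E S u v) : ReachIn E T u v := by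
  induction h with
  | refl => exact .refl
  | tail _ h ih => exact ih.tail ⟨hST h.1, hST h.2.1, h.2.2⟩

theorem AcyclicIn.mono (h : AcyclicIn E S) (hTS : T ⊆ S) : AcyclicIn E T :=
  fun ⟨a, ha, b, hb, hab, hba⟩ => h ⟨a, hTS ha, b, hTS hb, hab, reachIn_mono hTS hba⟩

theorem acyclicIn_empty : AcyclicIn E (∅ : Finset V) := fun ⟨_, h, _⟩ => notMem_empty _ h

theorem acyclicIn_singleton (hloop : ∀ x, ¬ E x x) (v : V) : AcyclicIn E {v} := by
  rintro ⟨a, ha, b, hb, hab, -⟩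
  rw [mem_singleton] at ha hb
  subst ha hb
  exact hloop _ hab

theorem StronglyConnIn.card_le_one (hsc : StronglyConnIn E S) (hac : AcyclicIn E S) :
    #S ≤ 1 := by
  refine Finset.card_le_one.2 fun a ha b hb => ?_
  obtain rfl | ⟨c, hac', hcb⟩ := (hsc a ha b hb).cases_head
  · rfl
  · exact (hac ⟨a, hac'.1, c, hac'.2.1, hac'.2.2, hcb.trans (hsc b hb a ha)⟩).elim

variable [DecidableEq V]

@[simp]
theorem mem_sccOf : u ∈ sccOf E S v ↔ u ∈ S ∧ ReachIn E S v u ∧ ReachIn E S u v := by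
  simp [sccOf]

theorem sccOf_subset : sccOf E S v ⊆ S := filter_subset _ _

theorem mem_sccOf_self (hv : v ∈ S) : v ∈ sccOf E S v := mem_sccOf.2 ⟨hv, .refl, .refl⟩

theorem sccOf_mono (hST : S ⊆ T) : sccOf E S v ⊆ sccOf E T v := fun _ hu =>
  have hu := mem_sccOf.1 hu
  mem_sccOf.2 ⟨hST hu.1, reachIn_mono hST hu.2.1, reachIn_mono hST hu.2.2⟩

theorem StronglyConnIn.sccOf_eq (h : StronglyConnIn E S) (hv : v ∈ S) : sccOf E S v = S :=
  Subset.antisymm sccOf_subset fun u hu => mem_sccOf.2 ⟨hu, h v hv u hu, h u hu v hv⟩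

theorem sccOf_ssubset (h : ¬ StronglyConnIn E S) : sccOf E S v ⊂ S := by
  refine ⟨sccOf_subset, fun hS => h fun a ha b hb => ?_⟩
  exact (mem_sccOf.1 (hS ha)).2.2.trans (mem_sccOf.1 (hS hb)).2.1

end Reachability

section CycleRank

variable [DecidableEq V] {E : V → V → Prop} {S T : Finset V} {v : V}

/-- The cycle rank of `G[S]`: `crankAux` with fuel `#S`, which is always enough. -/
noncomputable def crankOn (E : V → V → Prop) (S : Finset V) : ℕ := crankAux E #S S

theorem crank_eq_crankOn_univ [Fintype V] : crank E = crankOn E univ := rfl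

theorem crankAux_eq_crankAux : ∀ {n m : ℕ} {S : Finset V}, #S ≤ n → #S ≤ m →
    crankAux E n S = crankAux E m S
  | 0, m, S, hn, _ => by
    obtain rfl := card_eq_zero.1 (Nat.le_zero.1 hn)
    cases m <;> simp [crankAux, acyclicIn_empty]
  | n + 1, 0, S, _, hm => by
    obtain rfl := card_eq_zero.1 (Nat.le_zero.1 hm)
    simp [crankAux, acyclicIn_empty]
  | n + 1, m + 1, S, hn, hm => by
    have herase : ∀ v ∈ S, crankAux E n (S.erase v) = crankAux E m (S.erase v) := fun v hv =>
      crankAux_eq_crankAux (by rw [card_erase_of_mem hv]; omega)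
        (by rw [card_erase_of_mem hv]; omega)
    simp only [crankAux]
    split_ifs with hac hsc
    · rfl
    · congr 2
      ext x
      exact exists_congr fun v => and_congr_right fun hv => by rw [herase v hv]
    · refine sup_congr rfl fun v _ => crankAux_eq_crankAux ?_ ?_
      all_goals
        have := card_lt_card (sccOf_ssubset (v := v) hsc)
        omega

theorem crankOn_eq (E : V → V → Prop) (S : Finset V) :
    crankOn E S =
      if AcyclicIn E S then 0
      else if StronglyConnIn E S then 1 + sInf {m | ∃ v ∈ S, crankOn E (S.erase v) = m}
      else S.sup fun v => crankOn E (sccOf E S v) := by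
  rw [crankOn, crankAux_eq_crankAux le_rfl (Nat.le_succ _), crankAux]
  have hsub : ∀ {T : Finset V}, T ⊆ S → crankAux E #S T = crankOn E T := fun hT =>
    crankAux_eq_crankAux (card_le_card hT) le_rfl
  simp only [hsub (erase_subset _ _), hsub sccOf_subset]

theorem crankOn_of_acyclicIn (h : AcyclicIn E S) : crankOn E S = 0 := by
  rw [crankOn_eq, if_pos h]

theorem crankOn_empty : crankOn E ∅ = 0 := crankOn_of_acyclicIn acyclicIn_empty

theorem crankOn_le_of_stronglyConnIn (hac : ¬ AcyclicIn E S) (hsc : StronglyConnIn E S)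
    (hv : v ∈ S) : crankOn E S ≤ crankOn E (S.erase v) + 1 := by
  rw [crankOn_eq, if_neg hac, if_pos hsc, add_comm]
  exact Nat.add_le_add_right
    (Nat.sInf_le (show _ ∈ {m | ∃ v ∈ S, crankOn E (S.erase v) = m} from ⟨v, hv, rfl⟩)) 1

theorem exists_crankOn_eq_of_stronglyConnIn (hac : ¬ AcyclicIn E S)
    (hsc : StronglyConnIn E S) : ∃ v ∈ S, crankOn E S = crankOn E (S.erase v) + 1 := by
  obtain ⟨a, ha, -⟩ := not_not.1 hac
  have hne : {m | ∃ v ∈ S, crankOn E (S.erase v) = m}.Nonempty := ⟨_, a, ha, rfl⟩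
  obtain ⟨v, hv, hmin⟩ := Nat.sInf_mem hne
  refine ⟨v, hv, ?_⟩
  rw [crankOn_eq, if_neg hac, if_pos hsc, hmin, add_comm]

theorem crankOn_of_not_stronglyConnIn (hac : ¬ AcyclicIn E S) (hsc : ¬ StronglyConnIn E S) :
    crankOn E S = S.sup fun v => crankOn E (sccOf E S v) := by
  rw [crankOn_eq, if_neg hac, if_neg hsc]

theorem exists_crankOn_le_crankOn_sccOf (hne : S.Nonempty) :
    ∃ v ∈ S, crankOn E S ≤ crankOn E (sccOf E S v) := by
  obtain ⟨w, hw⟩ := hne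
  by_cases hac : AcyclicIn E S
  · exact ⟨w, hw, by simp [crankOn_of_acyclicIn hac]⟩
  by_cases hsc : StronglyConnIn E S
  · exact ⟨w, hw, by rw [hsc.sccOf_eq hw]⟩
  obtain ⟨v, hv, hsup⟩ := exists_mem_eq_sup S ⟨w, hw⟩ fun v => crankOn E (sccOf E S v)
  exact ⟨v, hv, (crankOn_of_not_stronglyConnIn hac hsc).trans_le hsup.le⟩

/-- Monotonicity and the one-vertex deletion bound have to be proved together: each is used for
smaller sets in the proof of the other. -/
theorem crankOn_mono_and_le_erase (S : Finset V) :
    (∀ T ⊆ S, crankOn E T ≤ crankOn E S) ∧ ∀ v, crankOn E S ≤ crankOn E (S.erase v) + 1 := by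
  induction S using Finset.strongInduction with
  | H S ih =>
  have hmono : ∀ v ∈ S, ∀ T ⊆ S.erase v, crankOn E T ≤ crankOn E (S.erase v) :=
    fun v hv => (ih _ (erase_ssubset hv)).1
  have herase : ∀ v, crankOn E S ≤ crankOn E (S.erase v) + 1 := by
    intro v
    by_cases hv : v ∈ S
    swap
    · rw [erase_eq_of_notMem hv]; omega
    by_cases hac : AcyclicIn E S
    · simp [crankOn_of_acyclicIn hac]
    by_cases hsc : StronglyConnIn E S
    · exact crankOn_le_of_stronglyConnIn hac hsc hv
    rw [crankOn_of_not_stronglyConnIn hac hsc]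
    refine Finset.sup_le fun w hw => ?_
    calc crankOn E (sccOf E S w) ≤ crankOn E ((sccOf E S w).erase v) + 1 :=
          (ih _ (sccOf_ssubset hsc)).2 v
      _ ≤ crankOn E (S.erase v) + 1 := by
          gcongr
          exact hmono v hv _ (erase_subset_erase v sccOf_subset)
  refine ⟨fun T hTS => ?_, herase⟩
  obtain rfl | hTS := hTS.eq_or_ssubset
  · rfl
  by_cases hac : AcyclicIn E S
  · simp [crankOn_of_acyclicIn (hac.mono hTS.subset)]
  by_cases hsc : StronglyConnIn E S
  · obtain ⟨v, hv, hSv⟩ := exists_crankOn_eq_of_stronglyConnIn hac hsc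
    calc crankOn E T ≤ crankOn E (T.erase v) + 1 := (ih T hTS).2 v
      _ ≤ crankOn E (S.erase v) + 1 := by
          gcongr
          exact hmono v hv _ (erase_subset_erase v hTS.subset)
      _ = crankOn E S := hSv.symm
  obtain rfl | hTne := T.eq_empty_or_nonempty
  · simp [crankOn_empty]
  obtain ⟨u, hu, hTu⟩ := exists_crankOn_le_crankOn_sccOf (E := E) hTne
  have huS := hTS.subset hu
  calc crankOn E T ≤ crankOn E (sccOf E T u) := hTu
    _ ≤ crankOn E (sccOf E S u) :=
        (ih _ (sccOf_ssubset hsc)).1 _ (sccOf_mono hTS.subset)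
    _ ≤ crankOn E S := by
        rw [crankOn_of_not_stronglyConnIn hac hsc]
        exact le_sup (f := fun v => crankOn E (sccOf E S v)) huS

theorem crankOn_mono (hTS : T ⊆ S) : crankOn E T ≤ crankOn E S :=
  (crankOn_mono_and_le_erase S).1 T hTS

theorem crankOn_le_crankOn_sdiff_add_card (S T : Finset V) :
    crankOn E S ≤ crankOn E (S \ T) + #T := by
  induction T using Finset.induction_on with
  | empty => simp
  | insert a T ha ih =>
    rw [sdiff_insert, card_insert_of_notMem ha]
    have := (crankOn_mono_and_le_erase (E := E) (S \ T)).2 a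
    omega

theorem crankOn_lt_card (hloop : ∀ x, ¬ E x x) (hv : v ∈ S) : crankOn E S < #S := by
  have h := crankOn_le_crankOn_sdiff_add_card (E := E) S (S.erase v)
  rw [sdiff_erase_self hv, crankOn_of_acyclicIn (acyclicIn_singleton hloop v),
    card_erase_of_mem hv] at h
  have := card_pos.2 ⟨v, hv⟩
  omega

end CycleRank

section IntervalDecomp

/-- The path decomposition whose `j`-th bag, for `j < N`, is `{v ∈ S | a v ≤ j ≤ b v}`: vertex `v`
lives exactly in the bags `a v, …, b v`, so the interval axiom holds automatically. -/
structure IsIntervalDecomp (E : V → V → Prop) (S : Finset V) (N w : ℕ) (a b : V → ℕ) :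
    Prop where
  le : ∀ v ∈ S, a v ≤ b v
  lt : ∀ v ∈ S, b v < N
  le_of_adj : ∀ u ∈ S, ∀ v ∈ S, E u v → a u ≤ b v
  card_bag_le : ∀ j, #{v ∈ S | a v ≤ j ∧ j ≤ b v} ≤ w + 1

variable {E : V → V → Prop} {S Q R : Finset V} {N N₁ N₂ w w' : ℕ} {a b a₁ b₁ a₂ b₂ : V → ℕ}

theorem IsIntervalDecomp.mono (h : IsIntervalDecomp E S N w a b) (hw : w ≤ w') :
    IsIntervalDecomp E S N w' a b :=
  ⟨h.le, h.lt, h.le_of_adj, fun j => (h.card_bag_le j).trans (by omega)⟩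

theorem IsIntervalDecomp.subset (h : IsIntervalDecomp E S N w a b) (hRS : R ⊆ S) :
    IsIntervalDecomp E R N w a b :=
  ⟨fun v hv => h.le v (hRS hv), fun v hv => h.lt v (hRS hv),
    fun u hu v hv => h.le_of_adj u (hRS hu) v (hRS hv),
    fun j => (card_le_card (filter_subset_filter _ hRS)).trans (h.card_bag_le j)⟩

theorem isIntervalDecomp_of_card_le_one (hS : #S ≤ 1) (w : ℕ) :
    IsIntervalDecomp E S 1 w (fun _ => 0) (fun _ => 0) :=
  ⟨fun _ _ => le_rfl, fun _ _ => zero_lt_one, fun _ _ _ _ _ => le_rfl,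
    fun _ => (card_filter_le _ _).trans (hS.trans (by omega))⟩

theorem IsIntervalDecomp.insert_in_every_bag [DecidableEq V] (h : IsIntervalDecomp E S N w a b)
    (v : V) :
    IsIntervalDecomp E (insert v S) (N + 1) (w + 1) (fun u => if u = v then 0 else a u)
      (fun u => if u = v then N else b u) := by
  have hS : ∀ u ∈ insert v S, u ≠ v → u ∈ S := fun u hu huv => (mem_insert.1 hu).resolve_left huv
  refine ⟨fun u hu => ?_, fun u hu => ?_, fun u hu x hx hux => ?_, fun j => ?_⟩
  · by_cases huv : u = v
    · simp [huv]
    · simpa [huv] using h.le u (hS u hu huv)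
  · by_cases huv : u = v
    · simp [huv]
    · simpa [huv] using (h.lt u (hS u hu huv)).trans (Nat.lt_succ_self N)
  · by_cases hxv : x = v
    · by_cases huv : u = v
      · simp [huv, hxv]
      · simpa [huv, hxv] using (h.le u (hS u hu huv)).trans (h.lt u (hS u hu huv)).le
    · by_cases huv : u = v
      · simp [huv, hxv]
      · simpa [huv, hxv] using h.le_of_adj u (hS u hu huv) x (hS x hx hxv) hux
  · refine (card_le_card fun u hu => ?_).trans ((card_insert_le v _).trans
      (Nat.succ_le_succ (h.card_bag_le j)))
    rw [mem_filter] at hu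
    by_cases huv : u = v
    · exact huv ▸ mem_insert_self _ _
    · simp only [huv, if_false] at hu
      exact mem_insert_of_mem (mem_filter.2 ⟨hS u hu.1 huv, hu.2⟩)

theorem IsIntervalDecomp.union [DecidableEq V] (hQ : IsIntervalDecomp E Q N₁ w a₁ b₁)
    (hR : IsIntervalDecomp E R N₂ w a₂ b₂) (hRQ : ∀ u ∈ R, ∀ v ∈ Q, ¬ E u v) :
    IsIntervalDecomp E (Q ∪ R) (N₁ + N₂) w (fun v => if v ∈ Q then a₁ v else N₁ + a₂ v)
      (fun v => if v ∈ Q then b₁ v else N₁ + b₂ v) := by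
  have hR' : ∀ v ∈ Q ∪ R, v ∉ Q → v ∈ R := fun v hv hvQ => (mem_union.1 hv).resolve_left hvQ
  refine ⟨fun v hv => ?_, fun v hv => ?_, fun u hu v hv huv => ?_, fun j => ?_⟩
  · by_cases hvQ : v ∈ Q
    · simpa [hvQ] using hQ.le v hvQ
    · simpa [hvQ] using hR.le v (hR' v hv hvQ)
  · by_cases hvQ : v ∈ Q
    · simpa [hvQ] using (hQ.lt v hvQ).trans_le (Nat.le_add_right _ _)
    · simpa [hvQ] using hR.lt v (hR' v hv hvQ)
  · by_cases huQ : u ∈ Q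
    · by_cases hvQ : v ∈ Q
      · simpa [huQ, hvQ] using hQ.le_of_adj u huQ v hvQ huv
      · simpa [huQ, hvQ] using ((hQ.le u huQ).trans (hQ.lt u huQ).le).trans (Nat.le_add_right _ _)
    · have huR := hR' u hu huQ
      by_cases hvQ : v ∈ Q
      · exact (hRQ u huR v hvQ huv).elim
      · simpa [huQ, hvQ] using hR.le_of_adj u huR v (hR' v hv hvQ) huv
  · by_cases hj : j < N₁
    · refine (card_le_card fun v hv => ?_).trans (hQ.card_bag_le j)
      rw [mem_filter] at hv ⊢
      by_cases hvQ : v ∈ Q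
      · simpa [hvQ] using hv
      · simp only [hvQ, if_false] at hv
        omega
    · refine (card_le_card fun v hv => ?_).trans (hR.card_bag_le (j - N₁))
      rw [mem_filter] at hv ⊢
      by_cases hvQ : v ∈ Q
      · simp only [hvQ, if_true] at hv
        have := hQ.lt v hvQ
        omega
      · simp only [hvQ, if_false] at hv
        exact ⟨hR' v hv.1 hvQ, by omega, by omega⟩

theorem exists_isIntervalDecomp_crankOn [DecidableEq V] (E : V → V → Prop) (S : Finset V) :
    ∃ N a b, IsIntervalDecomp E S N (crankOn E S) a b := by
  induction S using Finset.strongInduction with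
  | H S ih =>
  by_cases hsc : StronglyConnIn E S
  · by_cases hac : AcyclicIn E S
    · exact ⟨1, _, _, isIntervalDecomp_of_card_le_one (hsc.card_le_one hac) _⟩
    obtain ⟨v, hv, hSv⟩ := exists_crankOn_eq_of_stronglyConnIn hac hsc
    obtain ⟨N, a, b, h⟩ := ih _ (erase_ssubset hv)
    have h' := h.insert_in_every_bag v
    rw [insert_erase hv, ← hSv] at h'
    exact ⟨_, _, _, h'⟩
  -- the vertices reachable from `x` form a part of `S` that no edge leaves
  simp only [StronglyConnIn, not_forall] at hsc
  obtain ⟨x, hx, y, hy, hxy⟩ := hsc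
  set R := {u ∈ S | ReachIn E S x u}
  have hxR : x ∈ R := mem_filter.2 ⟨hx, .refl⟩
  have hyR : y ∉ R := fun h => hxy (mem_filter.1 h).2
  have hRQ : ∀ u ∈ R, ∀ v ∈ S \ R, ¬ E u v := fun u hu v hv huv =>
    (mem_sdiff.1 hv).2 (mem_filter.2 ⟨(mem_sdiff.1 hv).1,
      (mem_filter.1 hu).2.tail ⟨(mem_filter.1 hu).1, (mem_sdiff.1 hv).1, huv⟩⟩)
  have hRS : R ⊂ S := ssubset_of_subset_of_ne (filter_subset _ _) fun h => hyR (h ▸ hy)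
  have hQS : S \ R ⊂ S := sdiff_ssubset (filter_subset _ _) ⟨x, hxR⟩
  obtain ⟨N₁, a₁, b₁, hQ⟩ := ih _ hQS
  obtain ⟨N₂, a₂, b₂, hR⟩ := ih _ hRS
  have h := (hQ.mono (crankOn_mono hQS.subset)).union (hR.mono (crankOn_mono hRS.subset)) hRQ
  rw [sdiff_union_of_subset hRS.subset] at h
  exact ⟨_, _, _, h⟩

theorem IsIntervalDecomp.isDirPathDecomp [Fintype V] {E : V → V → Prop} {N w : ℕ} {a b : V → ℕ}
    (h : IsIntervalDecomp E univ N w a b) :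
    IsDirPathDecomp E
      ((List.range N).map fun j => ({v ∈ univ | a v ≤ j ∧ j ≤ b v} : Finset V)) := by
  have hab := fun v => h.le v (mem_univ v)
  have hbN := fun v => h.lt v (mem_univ v)
  refine ⟨fun v => ⟨_, List.mem_map_of_mem (List.mem_range.2 ((hab v).trans_lt (hbN v))),
    by simpa using hab v⟩, fun i j k hij hjk _ _ _ v hvi hvk => ?_, fun u v huv => ?_⟩
  · simp only [List.get_eq_getElem, List.getElem_map, List.getElem_range, mem_filter,
      mem_univ, true_and] at hvi hvk ⊢
    omega
  · rcases (h.le_of_adj u (mem_univ u) v (mem_univ v) huv).eq_or_lt with heq | hlt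
    · exact Or.inl ⟨_, List.mem_map_of_mem (List.mem_range.2 (heq ▸ hbN v)), by simp [hab u],
        by simp [heq, hab v]⟩
    · refine Or.inr ⟨a u, b v, by simpa using (hab u).trans_lt (hbN u), by simpa using hbN v, hlt,
        ?_, ?_⟩ <;> simp [hab u, hab v]

theorem IsIntervalDecomp.exists_isDirPathDecomp [Fintype V] {E : V → V → Prop} {N w : ℕ}
    {a b : V → ℕ} (h : IsIntervalDecomp E univ N w a b) :
    ∃ L, IsDirPathDecomp E L ∧ ∀ W ∈ L, #W ≤ w + 1 :=
  ⟨_, h.isDirPathDecomp, by simpa using fun j _ => h.card_bag_le j⟩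

theorem dpw_le_crank [DecidableEq V] [Fintype V] (E : V → V → Prop) : dpw E ≤ crank E := by
  obtain ⟨N, a, b, h⟩ := exists_isIntervalDecomp_crankOn E univ
  exact Nat.sInf_le h.exists_isDirPathDecomp

theorem exists_isDirPathDecomp_dpw [DecidableEq V] [Fintype V] (E : V → V → Prop) :
    ∃ L, IsDirPathDecomp E L ∧ ∀ W ∈ L, #W ≤ dpw E + 1 := by
  obtain ⟨N, a, b, h⟩ := exists_isIntervalDecomp_crankOn E univ
  exact Nat.sInf_mem (s := {w | ∃ L, IsDirPathDecomp E L ∧ ∀ W ∈ L, #W ≤ w + 1})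
    ⟨_, h.exists_isDirPathDecomp⟩

end IntervalDecomp

section Separator

theorem isWeakBalSep_of_partition [DecidableEq V] {E : V → V → Prop} {U S X Y : Finset V}
    (hUS : U \ S = X ∪ Y) (hXY : Disjoint X Y) (hE : ∀ x ∈ X, ∀ y ∈ Y, ¬ E x y)
    (hX : #X ≤ #Y + 1) (hY : #Y ≤ #X + 1) : IsWeakBalSep E U S := by
  have hreach : ∀ x y, ReachIn E (U \ S) x y → x ∈ X → y ∈ X := by
    intro x y h
    induction h with
    | refl => exact id
    | tail _ h ih =>
      intro hx
      exact (mem_union.1 (hUS ▸ h.2.1)).resolve_right (hE _ (ih hx) _ · h.2.2)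
  intro v _
  have hcard : #(U \ S) = #X + #Y := by rw [hUS, card_union_of_disjoint hXY]
  have hscc : sccOf E (U \ S) v ⊆ X ∨ sccOf E (U \ S) v ⊆ Y := by
    by_cases hvX : v ∈ X
    · exact Or.inl fun u hu => hreach v u (mem_sccOf.1 hu).2.1 hvX
    · refine Or.inr fun u hu => (mem_union.1 (hUS ▸ (mem_sccOf.1 hu).1)).resolve_left
        fun huX => hvX (hreach u v (mem_sccOf.1 hu).2.2 huX)
  rcases hscc with h | h <;> have := card_le_card h <;> omega

theorem exists_card_filter_lt_eq {β α : Type*} [LinearOrder α] (s : Finset β) {f : β → α}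
    (hf : Set.InjOn f s) {i : ℕ} (hi : i < #s) : ∃ x ∈ s, #{y ∈ s | f y < f x} = i := by
  induction s using Finset.induction_on_max_value f generalizing i with
  | empty => simp at hi
  | insert a s ha hmax ih =>
    have hlt : ∀ x ∈ s, f x < f a := fun x hx => (hmax x hx).lt_of_ne fun hxa =>
      ha (hf (by simp [hx]) (by simp) hxa ▸ hx)
    rw [card_insert_of_notMem ha] at hi
    rcases (Nat.lt_succ_iff.1 hi).lt_or_eq with hi | rfl
    · obtain ⟨x, hx, hcount⟩ := ih (hf.mono (by simp [Set.subset_insert])) hi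
      refine ⟨x, mem_insert_of_mem hx, ?_⟩
      rw [filter_insert, if_neg (hlt x hx).not_gt, hcount]
    · refine ⟨a, mem_insert_self a s, ?_⟩
      rw [filter_insert, if_neg (lt_irrefl _), filter_true_of_mem hlt]

/-- Among the `2 #U` distinct keys `s v`, `t v` (`v ∈ U`), the `#U`-th smallest one. -/
theorem exists_median_key {α : Type*} [LinearOrder α] {U : Finset V} (hU : U.Nonempty)
    {s t : V → α} (hinj : Set.InjOn (Sum.elim s t) (U.disjSum U)) :
    ∃ κ, (∃ v ∈ U, κ = s v ∨ κ = t v) ∧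
      #{v ∈ U | s v < κ} + #{v ∈ U | t v < κ} + 1 = #U ∧
      #{v ∈ U | s v ≤ κ} + #{v ∈ U | t v ≤ κ} = #U := by
  have hcount : ∀ p : α → Prop, [DecidablePred p] →
      #{x ∈ U.disjSum U | p (Sum.elim s t x)} = #{v ∈ U | p (s v)} + #{v ∈ U | p (t v)} := by
    intro p _
    rw [card_filter, card_filter, card_filter, sum_disjSum]
    rfl
  obtain ⟨e, he, hlt⟩ := exists_card_filter_lt_eq (U.disjSum U) hinj (i := #U - 1)
    (by rw [card_disjSum]; have := hU.card_pos; omega)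
  have hle : {x ∈ U.disjSum U | Sum.elim s t x ≤ Sum.elim s t e} =
      insert e {x ∈ U.disjSum U | Sum.elim s t x < Sum.elim s t e} := by
    ext x
    simp only [mem_filter, mem_insert, le_iff_lt_or_eq]
    constructor
    · rintro ⟨hx, hxe | hxe⟩
      exacts [Or.inr ⟨hx, hxe⟩, Or.inl (hinj hx he hxe)]
    · rintro (rfl | ⟨hx, hxe⟩)
      exacts [⟨he, Or.inr rfl⟩, ⟨hx, Or.inl hxe⟩]
  refine ⟨Sum.elim s t e, ?_, ?_, ?_⟩
  · rcases e with v | v <;> simp only [inl_mem_disjSum, inr_mem_disjSum] at he <;>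
      exact ⟨v, he, by simp⟩
  · have h : #{x ∈ U.disjSum U | Sum.elim s t x < Sum.elim s t e} =
        #{v ∈ U | s v < Sum.elim s t e} + #{v ∈ U | t v < Sum.elim s t e} :=
      hcount (· < Sum.elim s t e)
    have := hU.card_pos
    omega
  · have h : #{x ∈ U.disjSum U | Sum.elim s t x ≤ Sum.elim s t e} =
        #{v ∈ U | s v ≤ Sum.elim s t e} + #{v ∈ U | t v ≤ Sum.elim s t e} :=
      hcount (· ≤ Sum.elim s t e)
    rw [hle, card_insert_of_notMem (by simp), hlt] at h
    have := hU.card_pos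
    omega

/-- Vertex `v` is the interval `[s v, t v]`, and an edge `x → y` forces `x` to start before `y`
ends. Cutting at the median endpoint `κ`, the intervals lying right of `κ` have no edges into those
lying left of it, and the two sides differ in size by at most one. -/
theorem exists_isWeakBalSep_ssubset [DecidableEq V] {E : V → V → Prop} {α : Type*}
    [LinearOrder α] {U : Finset V} (hU : U.Nonempty) {s t : V → α}
    (hst : ∀ v ∈ U, s v < t v) (hinj : Set.InjOn (Sum.elim s t) (U.disjSum U))
    (hE : ∀ x ∈ U, ∀ y ∈ U, E x y → s x < t y) :
    ∃ κ, ∃ S ⊂ {v ∈ U | s v ≤ κ ∧ κ ≤ t v}, IsWeakBalSep E U S := by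
  obtain ⟨κ, ⟨v₀, hv₀, hκ⟩, hlt, hle⟩ := exists_median_key hU hinj
  refine ⟨κ, {v ∈ U | s v < κ ∧ κ < t v}, ?_, ?_⟩
  · have hsub : {v ∈ U | s v < κ ∧ κ < t v} ⊆ {v ∈ U | s v ≤ κ ∧ κ ≤ t v} := fun v hv => by
      simp only [mem_filter] at hv ⊢
      exact ⟨hv.1, hv.2.1.le, hv.2.2.le⟩
    refine (ssubset_iff_of_subset hsub).2 ⟨v₀, ?_, ?_⟩ <;> rcases hκ with rfl | rfl
    · exact mem_filter.2 ⟨hv₀, le_rfl, (hst v₀ hv₀).le⟩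
    · exact mem_filter.2 ⟨hv₀, (hst v₀ hv₀).le, le_rfl⟩
    · simp
    · simp
  have hX : #{v ∈ U | κ ≤ s v} + #{v ∈ U | s v < κ} = #U := by
    simpa [not_lt, add_comm] using card_filter_add_card_filter_not (s := U) (s · < κ)
  have hs : #{v ∈ U | s v < κ} ≤ #{v ∈ U | s v ≤ κ} :=
    card_le_card fun v hv => by simp only [mem_filter] at hv ⊢; exact ⟨hv.1, hv.2.le⟩
  have ht : #{v ∈ U | t v < κ} ≤ #{v ∈ U | t v ≤ κ} :=
    card_le_card fun v hv => by simp only [mem_filter] at hv ⊢; exact ⟨hv.1, hv.2.le⟩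
  refine isWeakBalSep_of_partition (X := {v ∈ U | κ ≤ s v}) (Y := {v ∈ U | t v ≤ κ})
    ?_ ?_ ?_ (by omega) (by omega)
  · ext v
    simp only [mem_sdiff, mem_filter, mem_union, not_and_or, not_lt]
    tauto
  · refine disjoint_filter.2 fun v hv h1 h2 => ?_
    exact (h1.trans_lt (hst v hv)).not_ge h2
  · intro x hx y hy hxy
    exact ((hE x (mem_filter.1 hx).1 y (mem_filter.1 hy).1 hxy).trans_le
      (mem_filter.1 hy).2).not_ge (mem_filter.1 hx).2

theorem IsIntervalDecomp.exists_isWeakBalSep [DecidableEq V] [Fintype V] {E : V → V → Prop}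
    {U : Finset V} {N w : ℕ} {a b : V → ℕ} (h : IsIntervalDecomp E U N w a b) :
    ∃ S, #S ≤ w ∧ IsWeakBalSep E U S := by
  obtain rfl | hU := U.eq_empty_or_nonempty
  · exact ⟨∅, by simp, fun v hv => by simp at hv⟩
  -- ties between endpoints are broken by parity and by an enumeration of `V`
  set idx : V → ℕ := fun v => Fintype.equivFin V v
  have hidx : idx.Injective := Fin.val_injective.comp (Fintype.equivFin V).injective
  set s : V → ℕ ×ₗ ℕ := fun v => toLex (2 * a v, idx v)
  set t : V → ℕ ×ₗ ℕ := fun v => toLex (2 * b v + 1, idx v)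
  have hst : ∀ v ∈ U, s v < t v := fun v hv =>
    Prod.Lex.toLex_lt_toLex.2 (Or.inl (by have := h.le v hv; omega))
  have hinj : Set.InjOn (Sum.elim s t) (U.disjSum U) := by
    rintro (x | x) - (y | y) - hxy <;>
      simp only [Sum.elim_inl, Sum.elim_inr, s, t, toLex_inj, Prod.mk.injEq] at hxy
    · exact congrArg _ (hidx hxy.2)
    · omega
    · omega
    · exact congrArg _ (hidx hxy.2)
  have hE : ∀ x ∈ U, ∀ y ∈ U, E x y → s x < t y := fun x hx y hy hxy =>
    Prod.Lex.toLex_lt_toLex.2 (Or.inl (by have := h.le_of_adj x hx y hy hxy; omega))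
  obtain ⟨κ, S, hS, hsep⟩ := exists_isWeakBalSep_ssubset hU hst hinj hE
  have hbag : {v ∈ U | s v ≤ κ ∧ κ ≤ t v} ⊆
      {v ∈ U | a v ≤ (ofLex κ).1 / 2 ∧ (ofLex κ).1 / 2 ≤ b v} := by
    intro v hv
    simp only [mem_filter, s, t, Prod.Lex.le_iff] at hv ⊢
    refine ⟨hv.1, ?_, ?_⟩ <;> simp only [ofLex_toLex] at hv <;> omega
  exact ⟨S, Nat.lt_succ_iff.1 ((card_lt_card hS).trans_le
    ((card_le_card hbag).trans (h.card_bag_le _))), hsep⟩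

theorem IsDirPathDecomp.exists_isIntervalDecomp [Fintype V] {E : V → V → Prop}
    {L : List (Finset V)} {w : ℕ} (hL : IsDirPathDecomp E L) (hw : ∀ W ∈ L, #W ≤ w + 1) :
    ∃ a b, IsIntervalDecomp E univ L.length w a b := by
  obtain ⟨hcover, hinterval, hedge⟩ := hL
  simp only [List.get_eq_getElem] at hinterval hedge
  set bag : ℕ → Finset V := fun j => L.getD j ∅
  have hbag : ∀ j (hj : j < L.length), L[j] = bag j := fun j hj => by
    simp [bag, hj]
  have hbag_lt : ∀ {v j}, v ∈ bag j → j < L.length := fun {v j} hv => by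
    by_contra hj
    simp [bag, List.getElem?_eq_none (not_lt.1 hj)] at hv
  have hmem : ∀ v, ∃ j, v ∈ bag j := fun v => by
    obtain ⟨W, hW, hvW⟩ := hcover v
    obtain ⟨j, hj, rfl⟩ := List.mem_iff_getElem.1 hW
    exact ⟨j, by simpa [← hbag j hj] using hvW⟩
  set a : V → ℕ := fun v => Nat.find (hmem v)
  set b : V → ℕ := fun v => Nat.findGreatest (v ∈ bag ·) L.length
  have ha : ∀ v, v ∈ bag (a v) := fun v => Nat.find_spec (hmem v)
  have ha_le : ∀ {v j}, v ∈ bag j → a v ≤ j := fun hv => Nat.find_min' _ hv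
  have hb_ge : ∀ {v j}, v ∈ bag j → j ≤ b v := fun hv => Nat.le_findGreatest (hbag_lt hv).le hv
  have hb : ∀ v, v ∈ bag (b v) := fun v =>
    Nat.findGreatest_spec (P := (v ∈ bag ·)) (hbag_lt (ha v)).le (ha v)
  have hmem_iff : ∀ v j, v ∈ bag j ↔ a v ≤ j ∧ j ≤ b v := fun v j => by
    refine ⟨fun hv => ⟨ha_le hv, hb_ge hv⟩, fun ⟨h₁, h₂⟩ => ?_⟩
    rcases h₁.eq_or_lt with rfl | h₁
    · exact ha v
    rcases h₂.eq_or_lt with rfl | h₂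
    · exact hb v
    have hj := h₂.trans (hbag_lt (hb v))
    simpa only [hbag] using hinterval _ _ _ h₁ h₂ (h₁.trans hj) hj (hbag_lt (hb v)) v
      (by simpa only [hbag] using ha v) (by simpa only [hbag] using hb v)
  refine ⟨a, b, fun v _ => hb_ge (ha v), fun v _ => hbag_lt (hb v), fun u _ v _ huv => ?_,
    fun j => ?_⟩
  · rcases hedge u v huv with ⟨W, hW, huW, hvW⟩ | ⟨i, j, hi, hj, hij, hui, hvj⟩
    · obtain ⟨j, hj, rfl⟩ := List.mem_iff_getElem.1 hW
      rw [hbag] at huW hvW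
      exact (ha_le huW).trans (hb_ge hvW)
    · rw [hbag] at hui hvj
      exact (ha_le hui).trans (hij.le.trans (hb_ge hvj))
  · rcases lt_or_ge j L.length with hj | hj
    · have hsub : ({v ∈ univ | a v ≤ j ∧ j ≤ b v} : Finset V) ⊆ bag j := fun v hv =>
        (hmem_iff v j).2 (mem_filter.1 hv).2
      exact (card_le_card hsub).trans (hbag j hj ▸ hw _ (List.getElem_mem _))
    · rw [filter_eq_empty_iff.2 fun v _ hv => (hv.2.trans_lt (hbag_lt (hb v))).not_ge hj]
      simp

theorem snum_le_dpw [DecidableEq V] [Fintype V] (E : V → V → Prop) : snum E ≤ dpw E := by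
  obtain ⟨L, hL, hw⟩ := exists_isDirPathDecomp_dpw E
  obtain ⟨a, b, h⟩ := hL.exists_isIntervalDecomp hw
  refine Finset.sup_le fun U _ => ?_
  obtain ⟨S, hS, hsep⟩ := (h.subset (subset_univ U)).exists_isWeakBalSep
  exact Nat.sInf_le ⟨S, hS, hsep⟩

end Separator

section CrankBound

open Real

theorem mul_log_two_le_log_one_add {y : ℝ} (h₀ : 0 ≤ y) (h₁ : y ≤ 1) :
    y * log 2 ≤ log (1 + y) := by
  have h := strictConcaveOn_log_Ioi.concaveOn.2 (Set.mem_Ioi.2 (one_pos : (0 : ℝ) < 1))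
    (Set.mem_Ioi.2 (two_pos : (0 : ℝ) < 2)) (sub_nonneg.2 h₁) h₀ (sub_add_cancel 1 y)
  simp only [smul_eq_mul, log_one, mul_zero, zero_add, mul_one] at h
  rwa [show 1 - y + y * 2 = 1 + y by ring] at h

/-- The difference of the two sides is concave in `c` and nonnegative at `c = k + 1` and at
`c = 3 k`. -/
theorem half_sub_le_mul_logb {k c : ℝ} (hk : 1 ≤ k) (hc₁ : k + 1 ≤ c) (hc₂ : c ≤ 3 * k) :
    (c - k + 1) / 2 ≤ k * logb 2 (c / k) := by
  have hk₀ : 0 < k := by linarith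
  have hL : 0 < log 2 := log_pos one_lt_two
  set φ : ℝ → ℝ := fun x => 2 * k * log x - log 2 * x + ((k - 1) * log 2 - 2 * k * log k)
  have hφ : ConcaveOn ℝ (Set.Ioi 0) φ :=
    ((strictConcaveOn_log_Ioi.concaveOn.smul (by linarith : 0 ≤ 2 * k)).sub
      ((LinearMap.mulLeft ℝ (log 2)).convexOn (convex_Ioi 0))).add_const _
  have hφ₁ : 0 ≤ φ (k + 1) := by
    have h := mul_log_two_le_log_one_add (y := 1 / k) (by positivity)
      ((div_le_one hk₀).2 hk)
    have e : log (k + 1) = log k + log (1 + 1 / k) := by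
      rw [← log_mul hk₀.ne' (by positivity)]
      congr 1
      field_simp
    have e' : 2 * k * (1 / k * log 2) = 2 * log 2 := by field_simp
    simp only [φ, e]
    nlinarith [mul_le_mul_of_nonneg_left h (by linarith : 0 ≤ 2 * k)]
  have hφ₃ : 0 ≤ φ (3 * k) := by
    have h₉ : 3 * log 2 ≤ 2 * log 3 := by
      have h := log_le_log (by norm_num : (0 : ℝ) < 2 ^ 3) (by norm_num : (2 : ℝ) ^ 3 ≤ 3 ^ 2)
      rw [log_pow, log_pow] at h
      push_cast at h
      exact h
    simp only [φ, log_mul (by norm_num : (3 : ℝ) ≠ 0) hk₀.ne']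
    nlinarith
  have hφc : 0 ≤ φ c := le_trans (le_min hφ₁ hφ₃) (hφ.ge_on_segment
    (Set.mem_Ioi.2 (by linarith)) (Set.mem_Ioi.2 (by linarith))
    (by rw [segment_eq_Icc (by linarith)]; exact ⟨hc₁, hc₂⟩))
  rw [logb, log_div (by linarith) hk₀.ne', mul_div_assoc', le_div_iff₀ hL]
  simp only [φ] at hφc
  linarith

/-- For `m ≤ k` this is the trivial bound: a loop-free digraph has cycle rank less than its
order. -/
noncomputable def crankBound (k m : ℕ) : ℝ :=
  if m ≤ k then (m : ℝ) - 1 else k * logb 2 (m / k) - 1 + k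

theorem crankBound_mono {k : ℕ} (hk : 1 ≤ k) : Monotone (crankBound k) := by
  intro m m' h
  have hk₀ : (0 : ℝ) < k := by exact_mod_cast hk
  have hmm' : (m : ℝ) ≤ m' := by exact_mod_cast h
  unfold crankBound
  split_ifs with h₁ h₂ h₂
  · linarith
  · have hm : (m : ℝ) ≤ k := by exact_mod_cast h₁
    have hm' : (k : ℝ) ≤ m' := by exact_mod_cast (not_le.1 h₂).le
    have := logb_nonneg one_lt_two ((one_le_div hk₀).2 hm')
    nlinarith
  · omega
  · have hm : (k : ℝ) < m := by exact_mod_cast not_le.1 h₁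
    have := logb_le_logb_of_le one_lt_two (div_pos (by linarith) hk₀)
      (div_le_div_of_nonneg_right hmm' hk₀.le)
    nlinarith

/-- The recursion behind the bound: delete a weak balanced separator of size `t ≤ k`, after which
every strong component has at most `⌈(c - t) / 2⌉` vertices. -/
theorem crankBound_step {k t c : ℕ} (hk : 1 ≤ k) (ht : t ≤ k) (hc : k < c) :
    t + crankBound k ((c - t + 1) / 2) ≤ crankBound k c := by
  set M := (c - t + 1) / 2
  have hk₀ : (0 : ℝ) < k := by exact_mod_cast hk
  rw [crankBound, crankBound, if_neg (not_le.2 hc)]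
  split_ifs with hMk
  · have hc₁ : (k : ℝ) + 1 ≤ c := by exact_mod_cast hc
    have hc₃ : (c : ℝ) ≤ 3 * k := by exact_mod_cast (by omega : c ≤ 3 * k)
    have htM : 2 * ((t : ℝ) + M) ≤ c + k + 1 := by
      exact_mod_cast (by omega : 2 * (t + M) ≤ c + k + 1)
    linarith [half_sub_le_mul_logb (by exact_mod_cast hk) hc₁ hc₃]
  · have hM₀ : (0 : ℝ) < M := by exact_mod_cast (by omega : 0 < M)
    have hc₀ : (0 : ℝ) < c := by exact_mod_cast (by omega : 0 < c)
    have hsplit : logb 2 (c / k) = logb 2 (c / M) + logb 2 (M / k) := by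
      rw [← logb_mul (by positivity) (by positivity)]
      congr 1
      field_simp
    have ht' : (t : ℝ) ≤ k * logb 2 (c / M) := by
      rcases Nat.eq_zero_or_pos t with rfl | ht₀
      · have hMc : (M : ℝ) ≤ c := by exact_mod_cast (by omega : M ≤ c)
        simpa using mul_nonneg hk₀.le (logb_nonneg one_lt_two ((one_le_div hM₀).2 hMc))
      · have h2M : 2 * (M : ℝ) ≤ c := by exact_mod_cast (by omega : 2 * M ≤ c)
        have h1 : 1 ≤ logb 2 (c / M) := by
          rw [le_logb_iff_rpow_le one_lt_two (by positivity), rpow_one, le_div_iff₀ hM₀]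
          linarith
        have : (t : ℝ) ≤ k := by exact_mod_cast ht
        nlinarith
    rw [hsplit]
    linarith

theorem crankOn_le_crankBound [DecidableEq V] {E : V → V → Prop} (hloop : ∀ x, ¬ E x x)
    {k : ℕ} (hk : 1 ≤ k) (hsep : ∀ U : Finset V, ∃ T, #T ≤ k ∧ IsWeakBalSep E U T)
    {S : Finset V} (hS : S.Nonempty) : (crankOn E S : ℝ) ≤ crankBound k #S := by
  induction hc : #S using Nat.strong_induction_on generalizing S with
  | _ c ih =>
  by_cases hck : c ≤ k
  · obtain ⟨v, hv⟩ := hS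
    have h := crankOn_lt_card hloop hv
    rw [hc] at h
    have h' : (crankOn E S : ℝ) + 1 ≤ c := by exact_mod_cast h
    rw [crankBound, if_pos hck]
    linarith
  rw [not_le] at hck
  obtain ⟨T, hTk, hT⟩ := hsep S
  have hcard : #(S \ T) + #(S ∩ T) = c := hc ▸ card_sdiff_add_card_inter S T
  have hST : #(S ∩ T) ≤ k := (card_le_card inter_subset_right).trans hTk
  obtain ⟨v, hv, hSv⟩ := exists_crankOn_le_crankOn_sccOf (E := E)
    (card_pos.1 (by omega : 0 < #(S \ T)))
  have hC : #(sccOf E (S \ T) v) ≤ (#(S \ T) + 1) / 2 := hT v hv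
  have hdel := crankOn_le_crankOn_sdiff_add_card (E := E) S (S ∩ T)
  rw [sdiff_inter_self_left] at hdel
  calc (crankOn E S : ℝ) ≤ #(S ∩ T) + crankOn E (sccOf E (S \ T) v) := by
        exact_mod_cast (by omega : crankOn E S ≤ #(S ∩ T) + crankOn E (sccOf E (S \ T) v))
    _ ≤ #(S ∩ T) + crankBound k ((c - #(S ∩ T) + 1) / 2) := by
        gcongr
        exact (ih _ (by omega) ⟨v, mem_sccOf_self hv⟩ rfl).trans (crankBound_mono hk (by omega))
    _ ≤ crankBound k c := crankBound_step hk hST hck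

theorem isWeakBalSep_self [DecidableEq V] (E : V → V → Prop) (U : Finset V) :
    IsWeakBalSep E U U := fun v hv => by simp at hv

theorem minWeakSep_le_card [DecidableEq V] (E : V → V → Prop) (U : Finset V) :
    minWeakSep E U ≤ #U :=
  Nat.sInf_le ⟨U, le_rfl, isWeakBalSep_self E U⟩

theorem exists_isWeakBalSep_card_le_snum [DecidableEq V] [Fintype V] (E : V → V → Prop)
    (U : Finset V) : ∃ T, #T ≤ snum E ∧ IsWeakBalSep E U T := by
  have hne : {c | ∃ S, #S ≤ c ∧ IsWeakBalSep E U S}.Nonempty :=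
    ⟨#U, U, le_rfl, isWeakBalSep_self E U⟩
  obtain ⟨T, hT, hsep⟩ := Nat.sInf_mem hne
  exact ⟨T, hT.trans (le_sup (f := minWeakSep E) (mem_powerset.2 (subset_univ U))), hsep⟩

theorem snum_le_card [DecidableEq V] [Fintype V] (E : V → V → Prop) :
    snum E ≤ Fintype.card V :=
  Finset.sup_le fun U _ => (minWeakSep_le_card E U).trans (card_le_univ U)

theorem crank_le_snum_mul_logb [DecidableEq V] [Fintype V] {E : V → V → Prop}
    (hloop : ∀ x, ¬ E x x) (hk : 1 ≤ snum E) :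
    (crank E : ℝ) ≤ snum E * logb 2 (Fintype.card V / snum E) - 1 + snum E := by
  have hkn := snum_le_card E
  have hne : (univ : Finset V).Nonempty := univ_nonempty_iff.2 (Fintype.card_pos_iff.1 (by omega))
  refine (crank_eq_crankOn_univ (E := E) ▸ crankOn_le_crankBound hloop hk
    (exists_isWeakBalSep_card_le_snum E) hne).trans ?_
  rw [card_univ, crankBound]
  split_ifs with h
  · rw [le_antisymm h hkn, div_self (by exact_mod_cast (by omega : snum E ≠ 0)), logb_one]
    simp
  · exact le_rfl

end CrankBound

theorem snum_dpw_crank_chain_general {V : Type*} [DecidableEq V] [Fintype V] (E : V → V → Prop)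
    (k n : ℕ) (hn : Fintype.card V = n)
    (hloopfree : ∀ v, ¬ E v v) (hk : snum E = k) (hk1 : 1 ≤ k) :
    k ≤ dpw E ∧ dpw E ≤ crank E ∧
      (crank E : ℝ) ≤ k * Real.logb 2 ((n : ℝ) / (k : ℝ)) - 1 + k := by
  subst hn hk
  exact ⟨snum_le_dpw E, dpw_le_crank E, crank_le_snum_mul_logb hloopfree hk1⟩

/-- Let `G` be a loop-free digraph with `n ≥ 1` vertices and weak separator
number `k ≥ 1`. Then `k ≤ dpw(G) ≤ crank(G) ≤ k·log₂(n/k) − 1 + k`. -/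
theorem snum_dpw_crank_chain {V : Type*} [DecidableEq V] [Fintype V] (E : V → V → Prop)
    (k n : ℕ) (hn : Fintype.card V = n) (hn1 : 1 ≤ n)
    (hloopfree : ∀ v, ¬ E v v) (hk : snum E = k) (hk1 : 1 ≤ k) :
    k ≤ dpw E ∧ dpw E ≤ crank E ∧
      (crank E : ℝ) ≤ k * Real.logb 2 ((n : ℝ) / (k : ℝ)) - 1 + k :=
  snum_dpw_crank_chain_general E k n hn hloopfree hk hk1
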